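/- For every positive integer n, 2·∑_{d | n, d odd} 1/d = (1/n!)·∑_{k=1}^{n} (−1)^k (k−1)! · B_{n,k}(θ'(0), θ''(0), …, θ^{(n−k+1)}(0)), where θ(q) = ∑_{m∈ℤ} (−1)^m q^{m²}. -/

import Mathlib

open PowerSeries Finset

/-- Number of representations of `n` as an ordered sum of `r` squares of integers. -/
noncomputable def sqRep (r n : ℕ) : ℕ := Nat.card {x : Fin r → ℤ // ∑ i, (x i) ^ 2 = (n : ℤ)}

/-- `θ(q) = ∑_{m ∈ ℤ} (-1)^m q^{m²}` as a formal power series over ℚ. -/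
noncomputable def theta : PowerSeries ℚ :=
  PowerSeries.mk fun j =>
    if j = 0 then 1 else if (Nat.sqrt j) ^ 2 = j then 2 * (-1 : ℚ) ^ (Nat.sqrt j) else 0

/-- The `j`-th derivative at `0` of a power series: `h^{(j)}(0) = j! ⬝ [q^j] h`. -/
noncomputable def derivAtZero (h : PowerSeries ℚ) (j : ℕ) : ℚ := (j.factorial : ℚ) * PowerSeries.coeff j h

/-- The partial Bell polynomial `B_{n,k}(x₁, x₂, …)`, defined via its exponential
generating function: `∑_{n ≥ k} B_{n,k}(x) qⁿ/n! = (1/k!) (∑_{j ≥ 1} x_j q^j / j!)^k`. -/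
noncomputable def bell (n k : ℕ) (x : ℕ → ℚ) : ℚ :=
  (n.factorial : ℚ) * ((k.factorial : ℚ)⁻¹ *
    PowerSeries.coeff n
      ((PowerSeries.mk fun j => if j = 0 then 0 else x j / (j.factorial : ℚ)) ^ k))
noncomputable def qb : ℕ → ℕ → ℚ⟦X⟧
  | 0, 0 => 1
  | 0, _+1 => 0
  | _+1, 0 => 1
  | m+1, k+1 => qb m (k+1) + X^(2*(m-k)) * qb m k

noncomputable def W (a b : ℕ) : ℚ⟦X⟧ := ∏ i ∈ Icc a b, (1 - (X : ℚ⟦X⟧)^(2*i))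

lemma qb_zero (m : ℕ) : qb m 0 = 1 := by cases m <;> rfl

lemma qb_eq_zero : ∀ m k, m < k → qb m k = 0 := by
  intro m
  induction m with
  | zero => intro k hk; match k, hk with | k+1, _ => rfl
  | succ m ih =>
    intro k hk
    match k, hk with
    | k+1, hk =>
      show qb m (k+1) + X^(2*(m-k)) * qb m k = 0
      rw [ih (k+1) (by omega), ih k (by omega), mul_zero, add_zero]

lemma W_empty (a b : ℕ) (h : b < a) : W a b = 1 := by
  unfold W; rw [Finset.Icc_eq_empty (by omega), Finset.prod_empty]

lemma W_succ (a b : ℕ) (h : a ≤ b + 1) : W a (b+1) = W a b * (1 - X^(2*(b+1))) := by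
  unfold W; rw [← Finset.prod_Icc_succ_top h]

lemma W_cons (a b : ℕ) (h : a ≤ b) : W a b = (1 - X^(2*a)) * W (a+1) b := by
  unfold W
  rw [show Icc a b = Ico a (b+1) by rw [Finset.Ico_add_one_right_eq_Icc],
    Finset.prod_eq_prod_Ico_succ_bot (by omega : a < b + 1), Finset.Ico_add_one_right_eq_Icc]

lemma qb_diag : ∀ m, qb m m = 1
  | 0 => rfl
  | m+1 => by
      show qb m (m+1) + X^(2*(m-m)) * qb m m = 1
      rw [qb_eq_zero m (m+1) (by omega), qb_diag m, Nat.sub_self]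
      simp

lemma constantCoeff_W (a b : ℕ) (ha : 1 ≤ a) : constantCoeff (W a b) = 1 := by
  unfold W
  rw [map_prod]
  apply Finset.prod_eq_one
  intro i hi
  simp only [Finset.mem_Icc] at hi
  rw [map_sub, map_one, map_pow, constantCoeff_X, zero_pow (by omega)]
  ring

lemma W_ne_zero (a b : ℕ) (ha : 1 ≤ a) : W a b ≠ 0 := by
  intro h
  have := constantCoeff_W a b ha
  rw [h, map_zero] at this
  exact zero_ne_one this

lemma qb_mul_W : ∀ m k, k ≤ m → qb m k * W 1 k = W (m-k+1) m := by
  intro m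
  induction m with
  | zero =>
    intro k hk
    interval_cases k
    simp [qb_zero, W_empty 1 0 (by omega)]
  | succ m ih =>
    intro k hk
    match k with
    | 0 =>
      rw [qb_zero, one_mul, W_empty 1 0 (by omega), W_empty (m+1-0+1) (m+1) (by omega)]
    | k+1 =>
      show (qb m (k+1) + X^(2*(m-k)) * qb m k) * W 1 (k+1) = W (m+1-(k+1)+1) (m+1)
      rcases Nat.lt_or_ge k m with hkm | hkm
      · -- k+1 <= m
        obtain ⟨c, rfl⟩ : ∃ c, m = k + c + 1 := ⟨m - k - 1, by omega⟩
        rw [show k+c+1-k = c+1 from by omega, show k+c+1+1-(k+1)+1 = c+2 from by omega]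
        have e1 : W 1 (k+1) = W 1 k * (1 - X^(2*(k+1))) := W_succ 1 k (by omega)
        have h2 : qb (k+c+1) (k+1) * W 1 (k+1) = W (c+1) (k+c+1) := by
          have := ih (k+1) (by omega)
          rwa [show k+c+1-(k+1)+1 = c+1 from by omega] at this
        have h1 : qb (k+c+1) k * W 1 k = W (c+2) (k+c+1) := by
          have := ih k (by omega)
          rwa [show k+c+1-k+1 = c+2 from by omega] at this
        have e3 : W (c+1) (k+c+1) = (1 - X^(2*(c+1))) * W (c+2) (k+c+1) :=
          W_cons (c+1) (k+c+1) (by omega)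
        have e5 : W (c+2) (k+c+1+1) = W (c+2) (k+c+1) * (1 - X^(2*(k+c+2))) := by
          rw [W_succ (c+2) (k+c+1) (by omega), show 2*(k+c+1+1) = 2*(k+c+2) from by omega]
        linear_combination h2 + e3 + X^(2*(c+1))*(1 - X^(2*(k+1)))*h1
          + X^(2*(c+1)) * qb (k+c+1) k * e1 - e5
      · -- k = m
        have hk' : k = m := by omega
        subst hk'
        rw [qb_eq_zero k (k+1) (by omega), Nat.sub_self, zero_add, pow_zero, one_mul,
          W_succ 1 k (by omega), ← mul_assoc, ih k le_rfl,
          show k+1-(k+1)+1 = 1 by omega, show k-k+1 = 1 by omega,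
          W_succ 1 k (by omega)]

lemma Rq (n j : ℕ) : qb (2*n+2) (j+2) =
    X^(2*(j+2)) * qb (2*n) (j+2) + (1 + X^(2*(2*n+1))) * qb (2*n) (j+1)
      + X^(2*(2*n-j)) * qb (2*n) j := by
  rcases Nat.lt_or_ge (j+1) (2*n) with hc | hc
  · -- main case : j+2 ≤ 2n
    obtain ⟨c, h2n⟩ : ∃ c, 2*n = j + c + 2 := ⟨2*n - j - 2, by omega⟩
    rw [show 2*n+2 = j+c+4 from by omega, h2n, show j+c+2-j = c+2 from by omega,
      show 2*(j+c+2+1) = 2*(j+c+3) from by omega]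
    have hW2 : W 1 (j+2) ≠ 0 := W_ne_zero 1 (j+2) le_rfl
    apply mul_right_cancel₀ hW2
    have e1 : W 1 (j+2) = W 1 (j+1) * (1 - X^(2*(j+2))) := W_succ 1 (j+1) (by omega)
    have e2 : W 1 (j+1) = W 1 j * (1 - X^(2*(j+1))) := W_succ 1 j (by omega)
    have hL := qb_mul_W (j+c+4) (j+2) (by omega)
    rw [show j+c+4-(j+2)+1 = c+3 from by omega] at hL
    have h2 := qb_mul_W (j+c+2) (j+2) (by omega)
    rw [show j+c+2-(j+2)+1 = c+1 from by omega] at h2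
    have h1 := qb_mul_W (j+c+2) (j+1) (by omega)
    rw [show j+c+2-(j+1)+1 = c+2 from by omega] at h1
    have h0 := qb_mul_W (j+c+2) j (by omega)
    rw [show j+c+2-j+1 = c+3 from by omega] at h0
    have e3 : W (c+1) (j+c+2) = (1 - X^(2*(c+1))) * W (c+2) (j+c+2) :=
      W_cons (c+1) (j+c+2) (by omega)
    have e4 : W (c+2) (j+c+2) = (1 - X^(2*(c+2))) * W (c+3) (j+c+2) :=
      W_cons (c+2) (j+c+2) (by omega)
    have e5 : W (c+3) (j+c+4) = W (c+3) (j+c+2) * ((1 - X^(2*(j+c+3))) * (1 - X^(2*(j+c+4)))) := by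
      rw [show j+c+4 = (j+c+3)+1 from by omega, W_succ (c+3) (j+c+3) (by omega),
        show j+c+3 = (j+c+2)+1 from by omega, W_succ (c+3) (j+c+2) (by omega),
        show j+c+2+1+1 = j+c+4 from by omega, show j+c+2+1 = j+c+3 from by omega]
      ring
    set Z := W (c+3) (j+c+2) with hZ
    have H2 : qb (j+c+2) (j+2) * W 1 (j+2) = (1-X^(2*(c+1))) * ((1-X^(2*(c+2))) * Z) := by
      rw [h2, e3, e4]
    have H1 : qb (j+c+2) (j+1) * W 1 (j+2) = (1-X^(2*(j+2))) * ((1-X^(2*(c+2))) * Z) := by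
      rw [e1, ← mul_assoc, h1, e4]; ring
    have H0 : qb (j+c+2) j * W 1 (j+2) = (1-X^(2*(j+1))) * ((1-X^(2*(j+2))) * Z) := by
      rw [e1, e2]
      calc qb (j+c+2) j * (W 1 j * (1 - X^(2*(j+1))) * (1 - X^(2*(j+2))))
          = (qb (j+c+2) j * W 1 j) * ((1 - X^(2*(j+1))) * (1 - X^(2*(j+2)))) := by ring
        _ = _ := by rw [h0]; ring
    have HL : qb (j+c+4) (j+2) * W 1 (j+2) = Z * ((1-X^(2*(j+c+3))) * (1-X^(2*(j+c+4)))) := by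
      rw [hL, e5]
    linear_combination HL - X^(2*(j+2)) * H2 - (1 + X^(2*(j+c+3))) * H1 - X^(2*(c+2)) * H0
  · rcases Nat.lt_or_ge j (2*n) with hb | hb
    · -- j = 2n - 1, n ≥ 1
      obtain ⟨m, rfl⟩ : ∃ m, n = m + 1 := ⟨n - 1, by omega⟩
      have hj : j = 2*m+1 := by omega
      subst hj
      rw [show 2*(m+1) = 2*m+2 from by omega, show 2*m+2+2 = 2*m+4 from by omega,
        show 2*m+1+2 = 2*m+3 from by omega, show 2*m+1+1 = 2*m+2 from by omega,
        show 2*m+2-(2*m+1) = 1 from by omega, show 2*(2*m+2+1) = 2*(2*m+3) from by omega,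
        qb_eq_zero (2*m+2) (2*m+3) (by omega), qb_diag (2*m+2), mul_zero, zero_add, mul_one]
      have hW : W 1 (2*m+3) ≠ 0 := W_ne_zero 1 (2*m+3) le_rfl
      apply mul_right_cancel₀ hW
      have hL := qb_mul_W (2*m+4) (2*m+3) (by omega)
      rw [show 2*m+4-(2*m+3)+1 = 2 from by omega] at hL
      have h1 := qb_mul_W (2*m+2) (2*m+1) (by omega)
      rw [show 2*m+2-(2*m+1)+1 = 2 from by omega] at h1
      have e1 : W 1 (2*m+3) = W 1 (2*m+1) * (1 - X^(2*(2*m+2))) * (1 - X^(2*(2*m+3))) := by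
        rw [show (2*m+3) = (2*m+2)+1 from by omega, W_succ 1 (2*m+2) (by omega),
          show (2*m+2) = (2*m+1)+1 from by omega, W_succ 1 (2*m+1) (by omega),
          show 2*m+1+1+1 = 2*m+3 from by omega, show 2*m+1+1 = 2*m+2 from by omega]
      have e6 : W 1 (2*m+3) = (1 - X^(2*1)) * (W 2 (2*m+2) * (1 - X^(2*(2*m+3)))) := by
        rw [show (2*m+3) = (2*m+2)+1 from by omega, W_succ 1 (2*m+2) (by omega),
          W_cons 1 (2*m+2) (by omega), show 2*m+2+1 = 2*m+3 from by omega]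
        ring
      have e7 : W 2 (2*m+4) = W 2 (2*m+2) * ((1 - X^(2*(2*m+3))) * (1 - X^(2*(2*m+4)))) := by
        rw [show (2*m+4) = (2*m+3)+1 from by omega, W_succ 2 (2*m+3) (by omega),
          show (2*m+3) = (2*m+2)+1 from by omega, W_succ 2 (2*m+2) (by omega),
          show 2*m+2+1+1 = 2*m+4 from by omega, show 2*m+2+1 = 2*m+3 from by omega]
        ring
      have H1 : X^2 * qb (2*m+2) (2*m+1) * W 1 (2*m+3) =
          X^2 * ((1 - X^(2*(2*m+2))) * (1 - X^(2*(2*m+3))) * W 2 (2*m+2)) := by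
        rw [e1]
        calc X^2 * qb (2*m+2) (2*m+1) * (W 1 (2*m+1) * (1 - X^(2*(2*m+2))) * (1 - X^(2*(2*m+3))))
            = X^2 * ((qb (2*m+2) (2*m+1) * W 1 (2*m+1)) *
                ((1 - X^(2*(2*m+2))) * (1 - X^(2*(2*m+3))))) := by ring
          _ = _ := by rw [h1]; ring
      rw [hL, e7, add_mul, H1, e6]
      ring
    · -- j ≥ 2n
      rcases Nat.lt_or_ge (2*n) j with hb2 | hb2
      · rw [qb_eq_zero (2*n+2) (j+2) (by omega), qb_eq_zero (2*n) (j+2) (by omega),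
          qb_eq_zero (2*n) (j+1) (by omega), qb_eq_zero (2*n) j (by omega)]
        ring
      · have hj : j = 2*n := by omega
        subst hj
        rw [qb_eq_zero (2*n) (2*n+2) (by omega), qb_eq_zero (2*n) (2*n+1) (by omega),
          qb_diag, qb_diag, Nat.sub_self]
        ring

lemma W_single (a : ℕ) : W a a = 1 - X^(2*a) := by
  unfold W; rw [Finset.Icc_self, Finset.prod_singleton]

lemma Rq1 (n : ℕ) : qb (2*n+2) 1 = X^2 * qb (2*n) 1 + (1 + X^(2*(2*n+1))) := by
  cases n with
  | zero =>
    have h1 : qb 2 1 = 1 + X^2 := by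
      show qb 1 1 + X^(2*(1-0)) * qb 1 0 = 1 + X^2
      show (qb 0 1 + X^(2*(0-0)) * qb 0 0) + X^(2*(1-0)) * qb 1 0 = 1 + X^2
      show ((0:ℚ⟦X⟧) + X^(2*(0-0)) * 1) + X^(2*(1-0)) * 1 = 1 + X^2
      norm_num
    rw [h1]
    have h0 : qb 0 1 = 0 := rfl
    rw [h0]
    ring
  | succ m =>
    have hW : W 1 1 ≠ 0 := W_ne_zero 1 1 le_rfl
    apply mul_right_cancel₀ hW
    have hL := qb_mul_W (2*(m+1)+2) 1 (by omega)
    rw [show 2*(m+1)+2-1+1 = 2*(m+1)+2 from by omega, W_single 1, W_single (2*(m+1)+2)] at hL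
    have h1 := qb_mul_W (2*(m+1)) 1 (by omega)
    rw [show 2*(m+1)-1+1 = 2*(m+1) from by omega, W_single 1, W_single (2*(m+1))] at h1
    rw [W_single 1]
    linear_combination hL - X^2 * h1

def sqe (n k : ℕ) : ℕ := (n-k)^2 + (k-n)^2

lemma sqe_cast (n k : ℕ) : (sqe n k : ℤ) = ((n:ℤ) - k)^2 := by
  rcases le_total n k with h | h
  · unfold sqe
    rw [Nat.sub_eq_zero_of_le h]
    push_cast [Nat.cast_sub h]
    ring
  · unfold sqe
    rw [Nat.sub_eq_zero_of_le h]
    push_cast [Nat.cast_sub h]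
    ring

lemma sqe_self (n : ℕ) : sqe n n = 0 := by simp [sqe]

lemma sqe_left (n d : ℕ) (h : d ≤ n) : sqe n (n-d) = d^2 := by
  have : (sqe n (n-d) : ℤ) = (d^2 : ℤ) := by
    rw [sqe_cast]; push_cast [Nat.cast_sub h]; ring
  exact_mod_cast this

lemma sqe_right (n d : ℕ) : sqe n (n+d) = d^2 := by
  have : (sqe n (n+d) : ℤ) = (d^2 : ℤ) := by
    rw [sqe_cast]; push_cast; ring
  exact_mod_cast this

lemma sqe1 (n k : ℕ) : sqe (n+1) (k+1) = sqe n k := by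
  have : (sqe (n+1) (k+1) : ℤ) = (sqe n k : ℤ) := by rw [sqe_cast, sqe_cast]; push_cast; ring
  exact_mod_cast this

lemma sqe2 (n k : ℕ) : sqe (n+1) k + 2*k = sqe n k + (2*n+1) := by
  have : ((sqe (n+1) k + 2*k : ℕ) : ℤ) = ((sqe n k + (2*n+1) : ℕ) : ℤ) := by
    push_cast [sqe_cast]; ring
  exact_mod_cast this

lemma sqe3 (n j : ℕ) (hj : j ≤ 2*n) : sqe (n+1) (j+2) + 2*(2*n-j) = sqe n j + (2*n+1) := by
  have : ((sqe (n+1) (j+2) + 2*(2*n-j) : ℕ) : ℤ) = ((sqe n j + (2*n+1) : ℕ) : ℤ) := by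
    push_cast [sqe_cast, Nat.cast_sub hj]; ring
  exact_mod_cast this

lemma ite_qb (m k : ℕ) (c : ℚ⟦X⟧) : (if k ≤ m then qb m k * c else 0) = qb m k * c := by
  split
  · rfl
  · rename_i h
    rw [qb_eq_zero m k (by omega), zero_mul]

noncomputable def Gp (n : ℕ) : Polynomial ℚ⟦X⟧ :=
  ∑ k ∈ range (2*n+1), Polynomial.C (qb (2*n) k * X^(sqe n k)) * Polynomial.X^k

lemma coeff_Gp (n j : ℕ) :
    (Gp n).coeff j = if j ≤ 2*n then qb (2*n) j * X^(sqe n j) else 0 := by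
  unfold Gp
  rw [Polynomial.finset_sum_coeff]
  simp only [Polynomial.coeff_C_mul, Polynomial.coeff_X_pow, mul_ite, mul_one, mul_zero]
  rw [Finset.sum_ite_eq (range (2*n+1)) j (fun k => qb (2*n) k * X^(sqe n k))]
  simp [Nat.lt_succ_iff]

lemma coeff_mul_CXpow (p : Polynomial ℚ⟦X⟧) (c : ℚ⟦X⟧) (t j : ℕ) :
    (p * (Polynomial.C c * Polynomial.X^t)).coeff j =
      if t ≤ j then p.coeff (j - t) * c else 0 := by
  rw [show p * (Polynomial.C c * Polynomial.X^t) = (p * Polynomial.C c) * Polynomial.X^t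
    from by ring, Polynomial.coeff_mul_X_pow']
  split_ifs <;> simp [Polynomial.coeff_mul_C]

lemma Gp_succ (n : ℕ) :
    Gp (n+1) = Gp n * ((1 + Polynomial.C ((X:ℚ⟦X⟧)^(2*n+1)) * Polynomial.X) *
      (Polynomial.X + Polynomial.C ((X:ℚ⟦X⟧)^(2*n+1)))) := by
  have hfac : (1 + Polynomial.C ((X:ℚ⟦X⟧)^(2*n+1)) * Polynomial.X) *
      (Polynomial.X + Polynomial.C ((X:ℚ⟦X⟧)^(2*n+1)))
      = Polynomial.C ((X:ℚ⟦X⟧)^(2*n+1)) * Polynomial.X^0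
        + Polynomial.C (1 + (X:ℚ⟦X⟧)^(2*n+1) * X^(2*n+1)) * Polynomial.X^1
        + Polynomial.C ((X:ℚ⟦X⟧)^(2*n+1)) * Polynomial.X^2 := by
    simp only [map_add, map_mul, map_one]
    ring
  rw [hfac]
  refine Polynomial.ext fun j => ?_
  rw [mul_add, mul_add, Polynomial.coeff_add, Polynomial.coeff_add,
    coeff_mul_CXpow, coeff_mul_CXpow, coeff_mul_CXpow, coeff_Gp]
  simp only [coeff_Gp, Nat.zero_le, if_true, Nat.sub_zero]
  rw [show 2*(n+1) = 2*n+2 from by omega]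
  match j with
  | 0 =>
    rw [if_pos (by omega : (0:ℕ) ≤ 2*n+2), if_pos (by omega : (0:ℕ) ≤ 2*n),
      if_neg (by omega : ¬ (1:ℕ) ≤ 0), if_neg (by omega : ¬ (2:ℕ) ≤ 0),
      qb_zero, qb_zero, one_mul, one_mul]
    have hs : sqe (n+1) 0 = sqe n 0 + (2*n+1) := by have := sqe2 n 0; omega
    rw [hs, pow_add]
    ring
  | 1 =>
    rw [if_pos (by omega : (1:ℕ) ≤ 2*n+2), if_pos (by omega : (1:ℕ) ≤ 1),
      if_neg (by omega : ¬ (2:ℕ) ≤ 1), show (1:ℕ) - 1 = 0 from rfl,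
      if_pos (by omega : (0:ℕ) ≤ 2*n), ite_qb]
    have p1 : (X:ℚ⟦X⟧)^2 * X^(sqe (n+1) 1) = X^(sqe n 1) * X^(2*n+1) := by
      rw [← pow_add, ← pow_add]; congr 1; have := sqe2 n 1; omega
    have p2' : (X:ℚ⟦X⟧)^(sqe (n+1) 1) = X^(sqe n 0) := by
      rw [show sqe (n+1) 1 = sqe n 0 from sqe1 n 0]
    rw [qb_zero, one_mul]
    linear_combination X^(sqe (n+1) 1) * Rq1 n + qb (2*n) 1 * p1
      + (1 + X^(2*n+1)*X^(2*n+1)) * p2'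
  | (j'+2) =>
    rw [if_pos (by omega : (1:ℕ) ≤ j'+2), if_pos (by omega : (2:ℕ) ≤ j'+2),
      show j'+2-1 = j'+1 from by omega, show j'+2-2 = j' from by omega,
      ite_qb, ite_qb, ite_qb, ite_qb]
    rcases le_or_gt j' (2*n) with hj | hj
    · have p1 : (X:ℚ⟦X⟧)^(2*(j'+2)) * X^(sqe (n+1) (j'+2))
          = X^(sqe n (j'+2)) * X^(2*n+1) := by
        rw [← pow_add, ← pow_add]; congr 1; have := sqe2 n (j'+2); omega
      have p2' : (X:ℚ⟦X⟧)^(sqe (n+1) (j'+2)) = X^(sqe n (j'+1)) := by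
        rw [show sqe (n+1) (j'+2) = sqe n (j'+1) from sqe1 n (j'+1)]
      have p3 : (X:ℚ⟦X⟧)^(2*(2*n-j')) * X^(sqe (n+1) (j'+2))
          = X^(sqe n j') * X^(2*n+1) := by
        rw [← pow_add, ← pow_add]; congr 1; have := sqe3 n j' hj; omega
      linear_combination X^(sqe (n+1) (j'+2)) * Rq n j' + qb (2*n) (j'+2) * p1
        + (1 + X^(2*n+1)*X^(2*n+1)) * qb (2*n) (j'+1) * p2' + qb (2*n) j' * p3
    · rw [qb_eq_zero (2*n+2) (j'+2) (by omega), qb_eq_zero (2*n) (j'+2) (by omega),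
        qb_eq_zero (2*n) (j'+1) (by omega), qb_eq_zero (2*n) j' (by omega)]
      ring

noncomputable def Tp (n : ℕ) : Polynomial ℚ⟦X⟧ :=
  ∏ i ∈ Icc 1 n, ((1 + Polynomial.C ((X:ℚ⟦X⟧)^(2*i-1)) * Polynomial.X) *
    (Polynomial.X + Polynomial.C ((X:ℚ⟦X⟧)^(2*i-1))))

lemma jtp : ∀ n, Tp n = Gp n := by
  intro n
  induction n with
  | zero =>
    unfold Tp Gp
    rw [Finset.Icc_eq_empty (by omega), Finset.prod_empty]
    rw [show 2*0+1 = 1 from rfl, Finset.sum_range_one]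
    have : qb 0 0 = 1 := rfl
    rw [this, sqe_self, pow_zero, mul_one, map_one, pow_zero, mul_one]
  | succ n ih =>
    have hstep : Tp (n+1) = Tp n * ((1 + Polynomial.C ((X:ℚ⟦X⟧)^(2*(n+1)-1)) * Polynomial.X) *
        (Polynomial.X + Polynomial.C ((X:ℚ⟦X⟧)^(2*(n+1)-1)))) := by
      unfold Tp
      rw [Finset.prod_Icc_succ_top (by omega : 1 ≤ n+1)]
    rw [hstep, ih, show 2*(n+1)-1 = 2*n+1 from by omega, ← Gp_succ]

lemma jtp_eval (n : ℕ) : (∏ i ∈ Icc 1 n, (1 - (X:ℚ⟦X⟧)^(2*i-1))^2) =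
    (-1:ℚ⟦X⟧)^n * ∑ k ∈ range (2*n+1), (-1)^k * qb (2*n) k * X^(sqe n k) := by
  have h := congrArg (Polynomial.eval (-1 : ℚ⟦X⟧)) (jtp n)
  rw [Tp, Gp, Polynomial.eval_prod, Polynomial.eval_finset_sum] at h
  simp only [Polynomial.eval_mul, Polynomial.eval_add, Polynomial.eval_one,
    Polynomial.eval_C, Polynomial.eval_X, Polynomial.eval_pow] at h
  have hnn : (-1:ℚ⟦X⟧)^n * (-1)^n = 1 := by
    rw [← pow_add, show n + n = 2*n from by omega, pow_mul]; norm_num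
  have hL : ∏ i ∈ Icc 1 n, ((1 + (X:ℚ⟦X⟧)^(2*i-1) * (-1)) * (-1 + X^(2*i-1)))
      = (-1:ℚ⟦X⟧)^n * ∏ i ∈ Icc 1 n, (1 - (X:ℚ⟦X⟧)^(2*i-1))^2 := by
    calc ∏ i ∈ Icc 1 n, ((1 + (X:ℚ⟦X⟧)^(2*i-1) * (-1)) * (-1 + X^(2*i-1)))
        = ∏ i ∈ Icc 1 n, ((-1) * (1 - (X:ℚ⟦X⟧)^(2*i-1))^2) :=
          Finset.prod_congr rfl (fun i _ => by ring)
      _ = ((-1:ℚ⟦X⟧)^(Icc 1 n).card) * ∏ i ∈ Icc 1 n, (1 - (X:ℚ⟦X⟧)^(2*i-1))^2 := by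
          rw [Finset.prod_mul_distrib, Finset.prod_const]
      _ = _ := by rw [Nat.card_Icc, show n+1-1 = n from by omega]
  rw [hL] at h
  have hR : ∑ k ∈ range (2*n+1), qb (2*n) k * (X:ℚ⟦X⟧)^(sqe n k) * (-1)^k
      = ∑ k ∈ range (2*n+1), (-1:ℚ⟦X⟧)^k * qb (2*n) k * X^(sqe n k) := by
    apply Finset.sum_congr rfl; intro k _; ring
  have h3 := congrArg (fun t => (-1:ℚ⟦X⟧)^n * t) h
  rw [← mul_assoc, hnn, one_mul] at h3
  rw [h3, hR]

lemma prod_sub_one {ι : Type*} (s : Finset ι) (f : ι → ℚ⟦X⟧) (M : ℕ)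
    (h : ∀ i ∈ s, (X:ℚ⟦X⟧)^M ∣ f i - 1) : (X:ℚ⟦X⟧)^M ∣ (∏ i ∈ s, f i) - 1 := by
  classical
  induction s using Finset.cons_induction_on with
  | empty => simp
  | @cons a s' hx ih =>
    rw [Finset.prod_cons]
    have h1 := h a (Finset.mem_cons_self a s')
    have h2 := ih (fun i hi => h i (Finset.mem_cons_of_mem hi))
    have he : f a * ∏ i ∈ s', f i - 1
        = (f a - 1) * ∏ i ∈ s', f i + ((∏ i ∈ s', f i) - 1) := by ring
    rw [he]
    exact dvd_add (h1.mul_right _) h2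

lemma W_sub_one (a b : ℕ) : (X:ℚ⟦X⟧)^(2*a) ∣ W a b - 1 := by
  apply prod_sub_one
  intro i hi
  simp only [Finset.mem_Icc] at hi
  have he : (1 - (X:ℚ⟦X⟧)^(2*i)) - 1 = -(X^(2*i)) := by ring
  rw [he]
  exact (pow_dvd_pow X (by omega)).neg_right

lemma W_inv_mul (a b : ℕ) (ha : 1 ≤ a) : W a b * (W a b)⁻¹ = 1 :=
  PowerSeries.mul_inv_cancel _ (by rw [constantCoeff_W a b ha]; exact one_ne_zero)

lemma qb_sub_inv (m k : ℕ) (hk : k ≤ m) :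
    (X:ℚ⟦X⟧)^(2*(m-k)+2) ∣ qb m k - (W 1 k)⁻¹ := by
  have h2 : W 1 k * (W 1 k)⁻¹ = 1 := W_inv_mul 1 k le_rfl
  have hq : qb m k = W (m-k+1) m * (W 1 k)⁻¹ := by
    calc qb m k = qb m k * (W 1 k * (W 1 k)⁻¹) := by rw [h2, mul_one]
      _ = (qb m k * W 1 k) * (W 1 k)⁻¹ := by ring
      _ = _ := by rw [qb_mul_W m k hk]
  rw [hq]
  have he : W (m-k+1) m * (W 1 k)⁻¹ - (W 1 k)⁻¹ = (W (m-k+1) m - 1) * (W 1 k)⁻¹ := by ring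
  rw [he]
  exact ((dvd_trans (pow_dvd_pow X (by omega)) (W_sub_one (m-k+1) m)).mul_right _)

lemma W_split (k K : ℕ) (h : k ≤ K) : W 1 K = W 1 k * W (k+1) K := by
  unfold W
  rw [show (1:ℕ) = 0 + 1 from rfl, Finset.Icc_add_one_left_eq_Ioc, Finset.Icc_add_one_left_eq_Ioc,
    show k + (0+1) = k + 1 from rfl, Finset.Icc_add_one_left_eq_Ioc]
  exact (Finset.prod_Ioc_consecutive _ (by omega) (by omega)).symm

lemma Winv_sub_inv (k K : ℕ) (h : k ≤ K) :
    (X:ℚ⟦X⟧)^(2*k+2) ∣ (W 1 k)⁻¹ - (W 1 K)⁻¹ := by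
  have hu : W (k+1) K * (W (k+1) K)⁻¹ = 1 := W_inv_mul (k+1) K (by omega)
  have hKinv : (W 1 K)⁻¹ = (W 1 k)⁻¹ * (W (k+1) K)⁻¹ := by
    rw [W_split k K h, PowerSeries.mul_inv_rev, mul_comm]
  rw [hKinv]
  have he : (W 1 k)⁻¹ - (W 1 k)⁻¹ * (W (k+1) K)⁻¹
      = (1 - (W (k+1) K)⁻¹) * (W 1 k)⁻¹ := by ring
  rw [he]
  have h1 : 1 - (W (k+1) K)⁻¹ = (W (k+1) K - 1) * (W (k+1) K)⁻¹ := by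
    rw [sub_mul, hu, one_mul]
  rw [h1]
  exact (((dvd_trans (pow_dvd_pow X (by omega : 2*k+2 ≤ 2*(k+1)))
    (W_sub_one (k+1) K)).mul_right _)).mul_right _

lemma sqe_le {n k : ℕ} (h : k ≤ n) : sqe n k = (n-k)^2 := by
  have h0 : k - n = 0 := by omega
  simp [sqe, h0]

lemma sqe_ge {n k : ℕ} (h : n ≤ k) : sqe n k = (k-n)^2 := by
  have h0 : n - k = 0 := by omega
  simp [sqe, h0]

lemma ineqA (n k : ℕ) (hk : k ≤ 2*n) : 2*n+1 ≤ 2*(2*n-k)+2 + sqe n k := by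
  rcases le_total k n with h | h
  · obtain ⟨d, rfl⟩ : ∃ d, n = k + d := ⟨n - k, by omega⟩
    rw [sqe_le (by omega), show k+d-k = d from by omega, show 2*(k+d)-k = k+2*d from by omega]
    nlinarith
  · obtain ⟨d, rfl⟩ : ∃ d, k = n + d := ⟨k - n, by omega⟩
    rw [sqe_ge (by omega), show n+d-n = d from by omega, show 2*n-(n+d) = n-d from by omega]
    have hdn : d ≤ n := by omega
    obtain ⟨e, rfl⟩ : ∃ e, n = d + e := ⟨n-d, by omega⟩
    rw [show d+e-d = e from by omega]
    nlinarith

lemma ineqB (n k : ℕ) (hk : k ≤ 2*n) : 2*n+1 ≤ 2*k+2 + sqe n k := by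
  rcases le_total k n with h | h
  · obtain ⟨d, rfl⟩ : ∃ d, n = k + d := ⟨n - k, by omega⟩
    rw [sqe_le (by omega), show k+d-k = d from by omega]
    nlinarith
  · obtain ⟨d, rfl⟩ : ∃ d, k = n + d := ⟨k - n, by omega⟩
    rw [sqe_ge (by omega), show n+d-n = d from by omega]
    nlinarith

lemma S2' (n : ℕ) : (-1:ℚ⟦X⟧)^n * ∑ k ∈ range (2*n+1), (-1:ℚ⟦X⟧)^k * X^(sqe n k)
    = 1 + ∑ d ∈ Icc 1 n, 2 * (-1:ℚ⟦X⟧)^d * X^(d^2) := by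
  rw [Finset.mul_sum]
  have hterm : ∀ k ∈ range (2*n+1), (-1:ℚ⟦X⟧)^n * ((-1)^k * X^(sqe n k))
      = (-1:ℚ⟦X⟧)^(n+k) * X^(sqe n k) := fun k _ => by rw [pow_add]; ring
  rw [Finset.sum_congr rfl hterm]
  rw [Finset.range_eq_Ico, ← Finset.sum_Ico_consecutive _ (Nat.zero_le n) (by omega : n ≤ 2*n+1),
    Finset.sum_eq_sum_Ico_succ_bot (by omega : n < 2*n+1)]
  have hmid : (-1:ℚ⟦X⟧)^(n+n) * X^(sqe n n) = 1 := by
    rw [sqe_self, pow_zero, mul_one, show n+n = 2*n from by omega, pow_mul]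
    norm_num
  have hA : ∑ k ∈ Finset.Ico 0 n, (-1:ℚ⟦X⟧)^(n+k) * X^(sqe n k)
      = ∑ d ∈ Icc 1 n, (-1:ℚ⟦X⟧)^d * X^(d^2) := by
    apply Finset.sum_nbij' (i := fun k => n - k) (j := fun d => n - d)
    · intro k hk
      simp only [Finset.mem_Ico] at hk
      simp only [Finset.mem_Icc]
      omega
    · intro d hd
      simp only [Finset.mem_Icc] at hd
      simp only [Finset.mem_Ico]
      omega
    · intro k hk
      simp only [Finset.mem_Ico] at hk
      omega
    · intro d hd
      simp only [Finset.mem_Icc] at hd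
      omega
    · intro k hk
      simp only [Finset.mem_Ico] at hk
      rw [sqe_le (by omega), show n + k = (n-k) + 2*k from by omega, pow_add, pow_mul]
      norm_num
  have hB : ∑ k ∈ Finset.Ico (n+1) (2*n+1), (-1:ℚ⟦X⟧)^(n+k) * X^(sqe n k)
      = ∑ d ∈ Icc 1 n, (-1:ℚ⟦X⟧)^d * X^(d^2) := by
    apply Finset.sum_nbij' (i := fun k => k - n) (j := fun d => n + d)
    · intro k hk
      simp only [Finset.mem_Ico] at hk
      simp only [Finset.mem_Icc]
      omega
    · intro d hd
      simp only [Finset.mem_Icc] at hd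
      simp only [Finset.mem_Ico]
      omega
    · intro k hk
      simp only [Finset.mem_Ico] at hk
      omega
    · intro d hd
      simp only [Finset.mem_Icc] at hd
      omega
    · intro k hk
      simp only [Finset.mem_Ico] at hk
      rw [sqe_ge (by omega), show n + k = 2*n + (k - n) from by omega, pow_add, pow_mul]
      norm_num
  rw [hA, hB, hmid]
  have h2 : ∑ d ∈ Icc 1 n, 2*(-1:ℚ⟦X⟧)^d*X^(d^2)
      = 2 * ∑ d ∈ Icc 1 n, (-1:ℚ⟦X⟧)^d * X^(d^2) := by
    rw [Finset.mul_sum]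
    exact Finset.sum_congr rfl (fun d _ => by ring)
  rw [h2]
  ring

lemma theta_trunc (n : ℕ) :
    (X:ℚ⟦X⟧)^(2*n+1) ∣ theta - (1 + ∑ d ∈ Icc 1 n, 2 * (-1:ℚ⟦X⟧)^d * X^(d^2)) := by
  rw [PowerSeries.X_pow_dvd_iff]
  intro j hj
  have hC : ∀ d : ℕ, (2 * (-1:ℚ⟦X⟧)^d * X^(d^2)) = PowerSeries.C (2 * (-1:ℚ)^d) * X^(d^2) := by
    intro d
    rw [map_mul, map_pow, map_neg, map_one, map_ofNat]
  rw [map_sub, map_add, Finset.sum_congr rfl (fun d _ => hC d), map_sum]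
  simp only [PowerSeries.coeff_C_mul, PowerSeries.coeff_X_pow, theta, PowerSeries.coeff_mk]
  rcases Nat.eq_zero_or_pos j with hj0 | hjpos
  · subst hj0
    rw [if_pos rfl]
    have hz : ∀ d ∈ Icc 1 n, (2 * (-1:ℚ)^d) * (if 0 = d^2 then (1:ℚ) else 0) = 0 := by
      intro d hd
      simp only [Finset.mem_Icc] at hd
      rw [if_neg (by nlinarith), mul_zero]
    rw [Finset.sum_congr rfl hz, Finset.sum_const_zero]
    simp
  · rw [if_neg (by omega)]
    have hcoeff1 : (PowerSeries.coeff j) (1 : ℚ⟦X⟧) = 0 := by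
      rw [PowerSeries.coeff_one, if_neg (by omega)]
    rw [hcoeff1]
    by_cases hsq : (Nat.sqrt j)^2 = j
    · set s := Nat.sqrt j with hs
      have hs1 : 1 ≤ s := by
        rcases Nat.eq_zero_or_pos s with h0 | h1
        · exfalso; rw [h0] at hsq; simp at hsq; omega
        · exact h1
      have hsn : s ≤ n := by
        by_contra hcon
        push_neg at hcon
        have : (n+1)^2 ≤ s^2 := Nat.pow_le_pow_left hcon 2
        nlinarith
      rw [if_pos hsq]
      have hsum : ∑ d ∈ Icc 1 n, (2 * (-1:ℚ)^d) * (if j = d^2 then (1:ℚ) else 0)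
          = 2 * (-1:ℚ)^s := by
        rw [Finset.sum_eq_single_of_mem s (Finset.mem_Icc.mpr ⟨hs1, hsn⟩)]
        · rw [if_pos hsq.symm, mul_one]
        · intro d _ hds
          rw [if_neg, mul_zero]
          intro hjd
          apply hds
          rw [hjd] at hs
          rw [hs]
          exact (Nat.sqrt_eq' d).symm
      rw [hsum]
      ring
    · rw [if_neg hsq]
      have hz : ∀ d ∈ Icc 1 n, (2 * (-1:ℚ)^d) * (if j = d^2 then (1:ℚ) else 0) = 0 := by
        intro d _
        rw [if_neg, mul_zero]
        intro hjd
        apply hsq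
        rw [hjd, Nat.sqrt_eq']
      rw [Finset.sum_congr rfl hz, Finset.sum_const_zero]
      ring

lemma theta_J (n : ℕ) :
    (X:ℚ⟦X⟧)^(2*n+1) ∣
      theta - (∏ i ∈ Icc 1 n, (1 - (X:ℚ⟦X⟧)^(2*i-1))^2) * W 1 (2*n) := by
  have hPu : W 1 (2*n) * (W 1 (2*n))⁻¹ = 1 := W_inv_mul 1 (2*n) le_rfl
  have hterm : ∀ k ∈ range (2*n+1), (X:ℚ⟦X⟧)^(2*n+1) ∣
      (-1:ℚ⟦X⟧)^k * ((qb (2*n) k - (W 1 (2*n))⁻¹) * X^(sqe n k)) := by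
    intro k hk
    simp only [Finset.mem_range] at hk
    have hk' : k ≤ 2*n := by omega
    have d1 : (X:ℚ⟦X⟧)^(2*n+1) ∣ (qb (2*n) k - (W 1 k)⁻¹) * X^(sqe n k) := by
      have h2 : (X:ℚ⟦X⟧)^(2*(2*n-k)+2 + sqe n k) ∣ (qb (2*n) k - (W 1 k)⁻¹) * X^(sqe n k) := by
        rw [pow_add]; exact mul_dvd_mul (qb_sub_inv (2*n) k hk') dvd_rfl
      exact dvd_trans (pow_dvd_pow X (ineqA n k hk')) h2
    have d2 : (X:ℚ⟦X⟧)^(2*n+1) ∣ ((W 1 k)⁻¹ - (W 1 (2*n))⁻¹) * X^(sqe n k) := by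
      have h2 : (X:ℚ⟦X⟧)^(2*k+2 + sqe n k) ∣ ((W 1 k)⁻¹ - (W 1 (2*n))⁻¹) * X^(sqe n k) := by
        rw [pow_add]; exact mul_dvd_mul (Winv_sub_inv k (2*n) hk') dvd_rfl
      exact dvd_trans (pow_dvd_pow X (ineqB n k hk')) h2
    have he : (qb (2*n) k - (W 1 (2*n))⁻¹) * X^(sqe n k)
        = (qb (2*n) k - (W 1 k)⁻¹) * X^(sqe n k)
          + ((W 1 k)⁻¹ - (W 1 (2*n))⁻¹) * X^(sqe n k) := by ring
    rw [he]
    exact (dvd_add d1 d2).mul_left _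
  have hsum := Finset.dvd_sum hterm
  have hre : ∑ k ∈ range (2*n+1), (-1:ℚ⟦X⟧)^k * ((qb (2*n) k - (W 1 (2*n))⁻¹) * X^(sqe n k))
      = (∑ k ∈ range (2*n+1), (-1:ℚ⟦X⟧)^k * qb (2*n) k * X^(sqe n k))
        - (W 1 (2*n))⁻¹ * ∑ k ∈ range (2*n+1), (-1:ℚ⟦X⟧)^k * X^(sqe n k) := by
    rw [Finset.mul_sum, ← Finset.sum_sub_distrib]
    exact Finset.sum_congr rfl (fun k _ => by ring)
  rw [hre] at hsum
  have hsum2 := hsum.mul_right ((-1:ℚ⟦X⟧)^n * W 1 (2*n))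
  have key : ((∑ k ∈ range (2*n+1), (-1:ℚ⟦X⟧)^k * qb (2*n) k * X^(sqe n k))
        - (W 1 (2*n))⁻¹ * ∑ k ∈ range (2*n+1), (-1:ℚ⟦X⟧)^k * X^(sqe n k))
          * ((-1:ℚ⟦X⟧)^n * W 1 (2*n))
      = ((-1:ℚ⟦X⟧)^n * ∑ k ∈ range (2*n+1), (-1:ℚ⟦X⟧)^k * qb (2*n) k * X^(sqe n k)) * W 1 (2*n)
        - ((-1:ℚ⟦X⟧)^n * ∑ k ∈ range (2*n+1), (-1:ℚ⟦X⟧)^k * X^(sqe n k)) := by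
    calc ((∑ k ∈ range (2*n+1), (-1:ℚ⟦X⟧)^k * qb (2*n) k * X^(sqe n k))
        - (W 1 (2*n))⁻¹ * ∑ k ∈ range (2*n+1), (-1:ℚ⟦X⟧)^k * X^(sqe n k))
          * ((-1:ℚ⟦X⟧)^n * W 1 (2*n))
        = ((-1:ℚ⟦X⟧)^n * ∑ k ∈ range (2*n+1), (-1:ℚ⟦X⟧)^k * qb (2*n) k * X^(sqe n k)) * W 1 (2*n)
          - ((-1:ℚ⟦X⟧)^n * ∑ k ∈ range (2*n+1), (-1:ℚ⟦X⟧)^k * X^(sqe n k))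
            * (W 1 (2*n) * (W 1 (2*n))⁻¹) := by ring
      _ = _ := by rw [hPu, mul_one]
  rw [key, ← jtp_eval n, S2' n] at hsum2
  have final : theta - (∏ i ∈ Icc 1 n, (1 - (X:ℚ⟦X⟧)^(2*i-1))^2) * W 1 (2*n)
      = (theta - (1 + ∑ d ∈ Icc 1 n, 2 * (-1:ℚ⟦X⟧)^d * X^(d^2)))
        - ((∏ i ∈ Icc 1 n, (1 - (X:ℚ⟦X⟧)^(2*i-1))^2) * W 1 (2*n)
            - (1 + ∑ d ∈ Icc 1 n, 2 * (-1:ℚ⟦X⟧)^d * X^(d^2))) := by ring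
  rw [final]
  exact dvd_sub (theta_trunc n) hsum2

noncomputable def geo (c : ℕ) : ℚ⟦X⟧ := PowerSeries.mk fun t => if c ∣ t then (1:ℚ) else 0

lemma one_sub_mul_geo (c : ℕ) (hc : 1 ≤ c) : (1 - (X:ℚ⟦X⟧)^c) * geo c = 1 := by
  ext j
  rw [sub_mul, one_mul, map_sub]
  rcases Nat.lt_or_ge j c with h | h
  · have hz : (PowerSeries.coeff j) ((X:ℚ⟦X⟧)^c * geo c) = 0 := by
      have hdvd : (X:ℚ⟦X⟧)^c ∣ X^c * geo c := Dvd.intro _ rfl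
      exact (PowerSeries.X_pow_dvd_iff.mp hdvd) j h
    rw [hz, sub_zero, geo, PowerSeries.coeff_mk, PowerSeries.coeff_one]
    rcases Nat.eq_zero_or_pos j with rfl | hj
    · rw [if_pos (dvd_zero c), if_pos rfl]
    · rw [if_neg (fun hd => by have := Nat.le_of_dvd hj hd; omega), if_neg (by omega)]
  · obtain ⟨t, rfl⟩ : ∃ t, j = c + t := ⟨j - c, by omega⟩
    rw [show c + t = t + c from by omega, PowerSeries.coeff_X_pow_mul, geo,
      PowerSeries.coeff_mk, PowerSeries.coeff_mk, PowerSeries.coeff_one]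
    have hiff : c ∣ t + c ↔ c ∣ t := Nat.dvd_add_self_right
    rw [if_neg (show ¬ (t + c = 0) from by omega)]
    by_cases hd : c ∣ t
    · rw [if_pos (hiff.mpr hd), if_pos hd]; ring
    · rw [if_neg (fun h => hd (hiff.mp h)), if_neg hd]; ring

lemma geo_inv (c : ℕ) (hc : 1 ≤ c) : (1 - (X:ℚ⟦X⟧)^c)⁻¹ = geo c := by
  have hconst : constantCoeff (1 - (X:ℚ⟦X⟧)^c) ≠ 0 := by
    rw [map_sub, map_one, map_pow, constantCoeff_X, zero_pow (by omega)]
    norm_num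
  calc (1 - (X:ℚ⟦X⟧)^c)⁻¹ = (1 - (X:ℚ⟦X⟧)^c)⁻¹ * ((1 - (X:ℚ⟦X⟧)^c) * geo c) := by
        rw [one_sub_mul_geo c hc, mul_one]
    _ = ((1 - (X:ℚ⟦X⟧)^c)⁻¹ * (1 - (X:ℚ⟦X⟧)^c)) * geo c := by ring
    _ = geo c := by rw [PowerSeries.inv_mul_cancel _ hconst, one_mul]

lemma deriv_one_sub_X_pow (c : ℕ) (hc : 1 ≤ c) :
    d⁄dX ℚ (1 - (X:ℚ⟦X⟧)^c) = -(PowerSeries.C (c:ℚ) * X^(c-1)) := by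
  rw [map_sub, Derivation.leibniz_pow, PowerSeries.derivative_X]
  have h1 : d⁄dX ℚ (1 : ℚ⟦X⟧) = 0 := by
    have := PowerSeries.derivative_C (R := ℚ) (r := 1)
    rwa [map_one] at this
  rw [h1, zero_sub, smul_eq_mul, mul_one, nsmul_eq_mul]
  congr 1

lemma one_sub_const (c : ℕ) (hc : 1 ≤ c) : constantCoeff (1 - (X:ℚ⟦X⟧)^c) ≠ 0 := by
  rw [map_sub, map_one, map_pow, constantCoeff_X, zero_pow (by omega)]
  norm_num

lemma deriv_prod {ι : Type*} (s : Finset ι) (e : ι → ℕ) (he : ∀ i ∈ s, 1 ≤ e i) :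
    d⁄dX ℚ (∏ i ∈ s, (1 - (X:ℚ⟦X⟧)^(e i)))
      = (∏ i ∈ s, (1 - (X:ℚ⟦X⟧)^(e i))) *
        (-∑ i ∈ s, PowerSeries.C ((e i : ℚ)) * X^(e i - 1) * (1 - X^(e i))⁻¹) := by
  classical
  induction s using Finset.cons_induction_on with
  | empty =>
    rw [Finset.prod_empty, Finset.sum_empty, neg_zero, mul_zero]
    have := PowerSeries.derivative_C (R := ℚ) (r := 1)
    rwa [map_one] at this
  | @cons a s' ha ih =>
    rw [Finset.prod_cons, Finset.sum_cons]
    have hea : 1 ≤ e a := he a (Finset.mem_cons_self a s')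
    have ih' := ih (fun i hi => he i (Finset.mem_cons_of_mem hi))
    rw [Derivation.leibniz, smul_eq_mul, smul_eq_mul, ih', deriv_one_sub_X_pow (e a) hea]
    have hinv : (1 - (X:ℚ⟦X⟧)^(e a)) * (1 - X^(e a))⁻¹ = 1 :=
      PowerSeries.mul_inv_cancel _ (one_sub_const (e a) hea)
    linear_combination ((∏ i ∈ s', (1 - (X:ℚ⟦X⟧)^(e i)))
      * (PowerSeries.C ((e a:ℚ)) * X^(e a - 1))) * hinv

lemma coeff_term (c j : ℕ) (hc : 1 ≤ c) :
    PowerSeries.coeff j (PowerSeries.C (c:ℚ) * X^(c-1) * (1 - X^c)⁻¹)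
      = if c ∣ (j+1) then (c:ℚ) else 0 := by
  rw [geo_inv c hc, mul_assoc, PowerSeries.coeff_C_mul]
  rcases Nat.lt_or_ge j (c-1) with h | h
  · have hz : PowerSeries.coeff j ((X:ℚ⟦X⟧)^(c-1) * geo c) = 0 :=
      (PowerSeries.X_pow_dvd_iff.mp (Dvd.intro _ rfl)) j h
    rw [hz, mul_zero, if_neg (fun hd => by have := Nat.le_of_dvd (by omega) hd; omega)]
  · obtain ⟨t, rfl⟩ : ∃ t, j = t + (c-1) := ⟨j - (c-1), by omega⟩
    rw [PowerSeries.coeff_X_pow_mul, geo, PowerSeries.coeff_mk]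
    have hiff : c ∣ t + (c-1) + 1 ↔ c ∣ t := by
      rw [show t + (c-1) + 1 = t + c from by omega]; exact Nat.dvd_add_self_right
    by_cases hd : c ∣ t
    · rw [if_pos hd, mul_one, if_pos (hiff.mpr hd)]
    · rw [if_neg hd, mul_zero, if_neg (fun h => hd (hiff.mp h))]

lemma sum_odd_div (n N : ℕ) (hN1 : 1 ≤ N) (hN : N ≤ 2*n) :
    ∑ i ∈ Icc 1 n, (if (2*i-1) ∣ N then ((2*i-1 : ℕ):ℚ) else 0)
      = ∑ d ∈ N.divisors.filter (fun d => Odd d), (d:ℚ) := by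
  rw [← Finset.sum_filter]
  apply Finset.sum_nbij' (i := fun i => 2*i-1) (j := fun d => (d+1)/2)
  · intro i hi
    simp only [Finset.mem_filter, Finset.mem_Icc] at hi
    simp only [Finset.mem_filter, Nat.mem_divisors]
    refine ⟨⟨hi.2, by omega⟩, ⟨i-1, by omega⟩⟩
  · intro d hd
    simp only [Finset.mem_filter, Nat.mem_divisors] at hd
    obtain ⟨⟨hdvd, hN0⟩, ⟨r, hr⟩⟩ := hd
    have hdN : d ≤ N := Nat.le_of_dvd (by omega) hdvd
    simp only [Finset.mem_filter, Finset.mem_Icc]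
    constructor
    · omega
    · rw [show 2*((d+1)/2)-1 = d from by omega]
      exact hdvd
  · intro i hi
    simp only [Finset.mem_filter, Finset.mem_Icc] at hi
    omega
  · intro d hd
    simp only [Finset.mem_filter, Nat.mem_divisors] at hd
    obtain ⟨_, ⟨r, hr⟩⟩ := hd
    omega
  · intro i _
    rfl

lemma sum_even_div (n N : ℕ) (hN1 : 1 ≤ N) (hN : N ≤ 2*n) :
    ∑ i ∈ Icc 1 (2*n), (if (2*i) ∣ N then ((2*i : ℕ):ℚ) else 0)
      = ∑ d ∈ N.divisors.filter (fun d => ¬ Odd d), (d:ℚ) := by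
  rw [← Finset.sum_filter]
  apply Finset.sum_nbij' (i := fun i => 2*i) (j := fun d => d/2)
  · intro i hi
    simp only [Finset.mem_filter, Finset.mem_Icc] at hi
    simp only [Finset.mem_filter, Nat.mem_divisors]
    refine ⟨⟨hi.2, by omega⟩, by rw [Nat.odd_iff]; omega⟩
  · intro d hd
    simp only [Finset.mem_filter, Nat.mem_divisors] at hd
    obtain ⟨⟨hdvd, hN0⟩, hodd⟩ := hd
    rw [Nat.odd_iff] at hodd
    have hdN : d ≤ N := Nat.le_of_dvd (by omega) hdvd
    have hd1 : 1 ≤ d := Nat.pos_of_dvd_of_pos hdvd (by omega)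
    simp only [Finset.mem_filter, Finset.mem_Icc]
    constructor
    · omega
    · rw [show 2*(d/2) = d from by omega]
      exact hdvd
  · intro i hi
    simp only [Finset.mem_filter, Finset.mem_Icc] at hi
    omega
  · intro d hd
    simp only [Finset.mem_filter, Nat.mem_divisors] at hd
    rw [Nat.odd_iff] at hd
    omega
  · intro i _
    rfl

lemma odd_dvd_of_odd {d N : ℕ} (hN : Odd N) (hd : d ∣ N) : Odd d := by
  rcases Nat.even_or_odd d with he | ho
  · exfalso
    rw [Nat.odd_iff] at hN
    obtain ⟨r, rfl⟩ := he
    have h2 : 2 ∣ N := dvd_trans ⟨r, by omega⟩ hd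
    omega
  · exact ho

lemma div_lemma : ∀ N : ℕ, 1 ≤ N →
    2 * (∑ d ∈ N.divisors.filter (fun d => Odd d), (d:ℚ))
      + (∑ d ∈ N.divisors.filter (fun d => ¬ Odd d), (d:ℚ))
    = 2 * ∑ d ∈ N.divisors.filter (fun d => Odd d), (N:ℚ)/d := by
  intro N
  induction N using Nat.strong_induction_on with
  | _ N ih =>
    intro hN1
    rcases Nat.even_or_odd N with heven | hodd
    · -- N = 2*M
      obtain ⟨M, rfl⟩ := heven
      have hM1 : 1 ≤ M := by omega
      have hMM : M < M + M := by omega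
      have hOddF : (M+M).divisors.filter (fun d => Odd d)
          = M.divisors.filter (fun d => Odd d) := by
        ext d
        simp only [Finset.mem_filter, Nat.mem_divisors]
        constructor
        · rintro ⟨⟨hdvd, _⟩, ho⟩
          refine ⟨⟨?_, by omega⟩, ho⟩
          have hco : d.Coprime 2 := Nat.coprime_two_right.mpr ho
          exact hco.dvd_of_dvd_mul_right (by rwa [show M * 2 = M + M from by ring])
        · rintro ⟨⟨hdvd, _⟩, ho⟩
          exact ⟨⟨dvd_add hdvd hdvd, by omega⟩, ho⟩
      have hEvenS : ∑ d ∈ (M+M).divisors.filter (fun d => ¬ Odd d), (d:ℚ)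
          = ∑ e ∈ M.divisors, 2*(e:ℚ) := by
        apply Finset.sum_nbij' (i := fun d => d/2) (j := fun e => 2*e)
        · intro d hd
          simp only [Finset.mem_filter, Nat.mem_divisors] at hd
          obtain ⟨⟨hdvd, _⟩, ho⟩ := hd
          rw [Nat.odd_iff] at ho
          rw [Nat.mem_divisors]
          obtain ⟨r, rfl⟩ := (by omega : 2 ∣ d)
          have hdvd2 : 2*r ∣ 2*M := by rwa [show M + M = 2*M from by ring] at hdvd
          obtain ⟨t, ht⟩ := hdvd2
          rw [mul_assoc] at ht
          have hM : M = r * t := by omega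
          rw [show 2*r/2 = r from by omega]
          exact ⟨⟨t, hM⟩, by omega⟩
        · intro e he
          rw [Nat.mem_divisors] at he
          simp only [Finset.mem_filter, Nat.mem_divisors]
          obtain ⟨r, rfl⟩ := he.1
          refine ⟨⟨⟨r, by ring⟩, by omega⟩, by rw [Nat.odd_iff]; omega⟩
        · intro d hd
          simp only [Finset.mem_filter, Nat.mem_divisors] at hd
          rw [Nat.odd_iff] at hd
          omega
        · intro e _
          omega
        · intro d hd
          simp only [Finset.mem_filter, Nat.mem_divisors] at hd
          rw [Nat.odd_iff] at hd
          show (d:ℚ) = 2 * ((d/2 : ℕ):ℚ)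
          rw [show ((d/2:ℕ):ℚ) = ((d:ℚ))/2 from by
            rw [eq_div_iff (by norm_num : (2:ℚ) ≠ 0)]
            exact_mod_cast (by omega : d/2*2 = d)]
          ring
      have hRHS : ∑ d ∈ M.divisors.filter (fun d => Odd d), ((M+M:ℕ):ℚ)/d
          = ∑ d ∈ M.divisors.filter (fun d => Odd d), 2*((M:ℚ)/d) := by
        apply Finset.sum_congr rfl
        intro d _
        push_cast
        ring
      rw [hOddF, hEvenS, hRHS]
      have hsplit : ∑ e ∈ M.divisors, 2*(e:ℚ)
          = 2 * ((∑ d ∈ M.divisors.filter (fun d => Odd d), (d:ℚ))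
            + ∑ d ∈ M.divisors.filter (fun d => ¬ Odd d), (d:ℚ)) := by
        rw [Finset.sum_filter_add_sum_filter_not M.divisors (fun d => Odd d) (fun d => (d:ℚ))]
        rw [Finset.mul_sum]
      have hIH := ih M hMM hM1
      have h2 : ∑ d ∈ M.divisors.filter (fun d => Odd d), 2*((M:ℚ)/d)
          = 2 * ∑ d ∈ M.divisors.filter (fun d => Odd d), (M:ℚ)/d := by
        rw [Finset.mul_sum]
      rw [hsplit, h2]
      linear_combination 2 * hIH
    · -- N odd
      have hEmpty : N.divisors.filter (fun d => ¬ Odd d) = ∅ := by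
        rw [Finset.filter_eq_empty_iff]
        intro d hd
        rw [Nat.mem_divisors] at hd
        simp only [not_not]
        exact odd_dvd_of_odd hodd hd.1
      have hFull : N.divisors.filter (fun d => Odd d) = N.divisors := by
        apply Finset.filter_true_of_mem
        intro d hd
        rw [Nat.mem_divisors] at hd
        exact odd_dvd_of_odd hodd hd.1
      rw [hEmpty, hFull, Finset.sum_empty, add_zero]
      have key : ∑ d ∈ N.divisors, (N:ℚ)/d = ∑ d ∈ N.divisors, (d:ℚ) := by
        have h := Nat.sum_div_divisors N (fun d => (N:ℚ)/d)
        rw [← h]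
        apply Finset.sum_congr rfl
        intro d hd
        rw [Nat.mem_divisors] at hd
        obtain ⟨⟨r, hr⟩, hN0⟩ := hd
        have hd1 : 1 ≤ d := Nat.pos_of_dvd_of_pos ⟨r, hr⟩ (by omega)
        have hr1 : 1 ≤ r := by
          rcases Nat.eq_zero_or_pos r with rfl | h
          · omega
          · exact h
        have hNd : N / d = r := by
          rw [hr]
          exact Nat.mul_div_cancel_left r (by omega : 0 < d)
        rw [hNd, div_eq_iff (by exact_mod_cast (by omega : r ≠ 0) : (r:ℚ) ≠ 0)]
        push_cast [hr]
        ring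
      rw [key]

noncomputable def Fser : ℚ⟦X⟧ :=
  PowerSeries.mk fun N => -2 * ∑ d ∈ (N+1).divisors.filter (fun d => Odd d), ((N+1:ℕ):ℚ)/d

lemma dvd_deriv {M : ℕ} {h : ℚ⟦X⟧} (hd : (X:ℚ⟦X⟧)^(M+1) ∣ h) :
    (X:ℚ⟦X⟧)^M ∣ d⁄dX ℚ h := by
  rw [PowerSeries.X_pow_dvd_iff] at hd ⊢
  intro j hj
  rw [PowerSeries.coeff_derivative, hd (j+1) (by omega), zero_mul]

lemma theta_deriv : d⁄dX ℚ theta = theta * Fser := by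
  have key : ∀ n : ℕ, (X:ℚ⟦X⟧)^(2*n) ∣ (d⁄dX ℚ theta - theta * Fser) := by
    intro n
    have hJo : ∏ i ∈ Icc 1 n, (1 - (X:ℚ⟦X⟧)^(2*i-1))^2
        = (∏ i ∈ Icc 1 n, (1 - (X:ℚ⟦X⟧)^(2*i-1)))^2 := by
      rw [← Finset.prod_pow]
    have hθJ : (X:ℚ⟦X⟧)^(2*n+1) ∣
        theta - (∏ i ∈ Icc 1 n, (1 - (X:ℚ⟦X⟧)^(2*i-1)))^2 * W 1 (2*n) := by
      have := theta_J n
      rwa [hJo] at this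
    set Po := ∏ i ∈ Icc 1 n, (1 - (X:ℚ⟦X⟧)^(2*i-1)) with hPo
    set Wn := W 1 (2*n) with hWn
    set So := ∑ i ∈ Icc 1 n,
      PowerSeries.C (((2*i-1 : ℕ)):ℚ) * X^((2*i-1) - 1) * (1 - X^(2*i-1))⁻¹ with hSo
    set Se := ∑ i ∈ Icc 1 (2*n),
      PowerSeries.C (((2*i : ℕ)):ℚ) * X^((2*i) - 1) * (1 - X^(2*i))⁻¹ with hSe
    have hDPo : d⁄dX ℚ Po = Po * (-So) :=
      deriv_prod _ _ (fun i hi => by simp only [Finset.mem_Icc] at hi; omega)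
    have hDW : d⁄dX ℚ Wn = Wn * (-Se) := by
      rw [hWn]
      unfold W
      exact deriv_prod _ _ (fun i hi => by simp only [Finset.mem_Icc] at hi; omega)
    have hDJ : d⁄dX ℚ (Po^2 * Wn) = (Po^2 * Wn) * (-(2*So + Se)) := by
      rw [Derivation.leibniz, Derivation.leibniz_pow, hDPo, hDW, smul_eq_mul, smul_eq_mul,
        smul_eq_mul]
      ring
    have hGF : (X:ℚ⟦X⟧)^(2*n) ∣ (-(2*So + Se)) - Fser := by
      rw [PowerSeries.X_pow_dvd_iff]
      intro j hj
      have hcSo : PowerSeries.coeff j So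
          = ∑ d ∈ (j+1).divisors.filter (fun d => Odd d), (d:ℚ) := by
        rw [hSo, map_sum]
        rw [Finset.sum_congr rfl (fun i hi => by
          simp only [Finset.mem_Icc] at hi
          exact coeff_term (2*i-1) j (by omega))]
        exact sum_odd_div n (j+1) (by omega) (by omega)
      have hcSe : PowerSeries.coeff j Se
          = ∑ d ∈ (j+1).divisors.filter (fun d => ¬ Odd d), (d:ℚ) := by
        rw [hSe, map_sum]
        rw [Finset.sum_congr rfl (fun i hi => by
          simp only [Finset.mem_Icc] at hi
          exact coeff_term (2*i) j (by omega))]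
        exact sum_even_div n (j+1) (by omega) (by omega)
      have hdl := div_lemma (j+1) (by omega)
      have h2 : PowerSeries.coeff j (2 * So) = 2 * PowerSeries.coeff j So := by
        rw [two_mul, map_add]; ring
      rw [map_sub, map_neg, map_add]
      unfold Fser
      rw [PowerSeries.coeff_mk, h2, hcSo, hcSe]
      linarith [hdl]
    have hcomb : d⁄dX ℚ theta - theta * Fser
        = d⁄dX ℚ (theta - Po^2 * Wn)
          + (d⁄dX ℚ (Po^2 * Wn) - (Po^2 * Wn) * (-(2*So + Se)))
          + (Po^2 * Wn) * ((-(2*So + Se)) - Fser)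
          + (Po^2 * Wn - theta) * (-Fser) * (-1) := by
      rw [map_sub]
      ring
    rw [hcomb, hDJ, sub_self]
    have t1 : (X:ℚ⟦X⟧)^(2*n) ∣ d⁄dX ℚ (theta - Po^2 * Wn) := dvd_deriv hθJ
    have t3 : (X:ℚ⟦X⟧)^(2*n) ∣ (Po^2 * Wn) * ((-(2*So + Se)) - Fser) := hGF.mul_left _
    have t4 : (X:ℚ⟦X⟧)^(2*n) ∣ (Po^2 * Wn - theta) * (-Fser) * (-1) := by
      have : (X:ℚ⟦X⟧)^(2*n) ∣ Po^2 * Wn - theta := by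
        have hneg := hθJ.neg_right
        rw [neg_sub] at hneg
        exact dvd_trans (pow_dvd_pow X (by omega)) hneg
      exact (this.mul_right _).mul_right _
    exact dvd_add (dvd_add (dvd_add t1 (dvd_zero _)) t3) t4
  have hzero : d⁄dX ℚ theta - theta * Fser = 0 := by
    ext j
    have hk := key (j+1)
    rw [PowerSeries.X_pow_dvd_iff] at hk
    rw [map_zero]
    exact hk j (by omega)
  rw [← sub_eq_zero]
  exact hzero

lemma deriv_one_ps : d⁄dX ℚ (1:ℚ⟦X⟧) = 0 := by
  have := PowerSeries.derivative_C (R := ℚ) (r := 1)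
  rwa [map_one] at this

lemma theta_const : constantCoeff theta = 1 := by
  rw [← PowerSeries.coeff_zero_eq_constantCoeff_apply]
  unfold theta
  rw [PowerSeries.coeff_mk, if_pos rfl]

lemma coeff_neg_one_pow_mul (k j : ℕ) (z : ℚ⟦X⟧) :
    PowerSeries.coeff j ((-1:ℚ⟦X⟧)^k * z) = (-1:ℚ)^k * PowerSeries.coeff j z := by
  have h : ((-1:ℚ⟦X⟧))^k = PowerSeries.C ((-1:ℚ)^k) := by
    rw [map_pow, map_neg, map_one]
  rw [h, PowerSeries.coeff_C_mul]

theorem sum_inv_odd_divisors_bell (n : ℕ) (hn : 0 < n) :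
    2 * ∑ d ∈ n.divisors.filter (fun d => Odd d), (1 : ℚ) / d =
      (1 / (n.factorial : ℚ)) * ∑ k ∈ Finset.Icc 1 n,
        (-1 : ℚ) ^ k * ((k - 1).factorial : ℚ) * bell n k (derivAtZero theta) := by
  classical
  have hmk : (PowerSeries.mk fun j => if j = 0 then 0
      else derivAtZero theta j / (j.factorial : ℚ)) = theta - 1 := by
    ext j
    rw [PowerSeries.coeff_mk, map_sub]
    cases j with
    | zero =>
      rw [if_pos rfl, PowerSeries.coeff_one, if_pos rfl]
      unfold theta
      rw [PowerSeries.coeff_mk, if_pos rfl]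
      norm_num
    | succ m =>
      rw [if_neg (by omega), PowerSeries.coeff_one, if_neg (by omega), sub_zero]
      unfold derivAtZero
      exact mul_div_cancel_left₀ _ (by exact_mod_cast (Nat.factorial_ne_zero (m+1)))
  have hbell : ∀ k, bell n k (derivAtZero theta)
      = (n.factorial : ℚ) * ((k.factorial : ℚ)⁻¹
          * PowerSeries.coeff n ((theta - 1)^k)) := by
    intro k
    unfold bell
    rw [hmk]
  have hRHS : (1 / (n.factorial : ℚ)) * ∑ k ∈ Finset.Icc 1 n,
      (-1 : ℚ) ^ k * ((k - 1).factorial : ℚ) * bell n k (derivAtZero theta)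
      = ∑ k ∈ Finset.Icc 1 n,
          (-1:ℚ)^k * (k:ℚ)⁻¹ * PowerSeries.coeff n ((theta - 1)^k) := by
    rw [Finset.mul_sum]
    apply Finset.sum_congr rfl
    intro k hk
    simp only [Finset.mem_Icc] at hk
    rw [hbell k]
    obtain ⟨m, rfl⟩ : ∃ m, k = m + 1 := ⟨k-1, by omega⟩
    rw [show m + 1 - 1 = m from by omega]
    have hfac : ((m+1).factorial : ℚ) = (m+1) * (m.factorial : ℚ) := by
      rw [Nat.factorial_succ]; push_cast; ring
    have hm : (m.factorial : ℚ) ≠ 0 := by exact_mod_cast Nat.factorial_ne_zero m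
    have hnf : (n.factorial : ℚ) ≠ 0 := by exact_mod_cast Nat.factorial_ne_zero n
    have hm1 : ((m:ℚ)+1) ≠ 0 := by positivity
    rw [hfac]
    field_simp
    push_cast
    ring
  rw [hRHS]
  have hn0 : (n:ℚ) ≠ 0 := by exact_mod_cast (by omega : n ≠ 0)
  apply mul_left_cancel₀ hn0
  have hL : (n:ℚ) * (2 * ∑ d ∈ n.divisors.filter (fun d => Odd d), (1:ℚ)/d)
      = 2 * ∑ d ∈ n.divisors.filter (fun d => Odd d), (n:ℚ)/d := by
    rw [Finset.mul_sum, Finset.mul_sum, Finset.mul_sum]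
    exact Finset.sum_congr rfl (fun d _ => by ring)
  rw [hL]
  have hterm : ∀ k ∈ Finset.Icc 1 n,
      (n:ℚ) * ((-1:ℚ)^k * (k:ℚ)⁻¹ * PowerSeries.coeff n ((theta-1)^k))
      = (-1:ℚ)^k * PowerSeries.coeff (n-1) ((theta-1)^(k-1) * d⁄dX ℚ theta) := by
    intro k hk
    simp only [Finset.mem_Icc] at hk
    have hDg : d⁄dX ℚ (theta - 1) = d⁄dX ℚ theta := by
      rw [map_sub, deriv_one_ps, sub_zero]
    have hcd := PowerSeries.coeff_derivative ((theta-1)^k) (n-1)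
    rw [show n-1+1 = n from by omega] at hcd
    have hD : d⁄dX ℚ ((theta-1)^k) = k • ((theta-1)^(k-1) * d⁄dX ℚ theta) := by
      rw [Derivation.leibniz_pow, smul_eq_mul, hDg]
    have hEq : PowerSeries.coeff n ((theta-1)^k) * ((n-1:ℕ)+1 : ℚ)
        = (k:ℚ) * PowerSeries.coeff (n-1) ((theta-1)^(k-1) * d⁄dX ℚ theta) := by
      rw [← hcd, hD, map_nsmul, nsmul_eq_mul]
    have hcast : ((n-1:ℕ) : ℚ) + 1 = (n:ℚ) := by
      have : ((n-1:ℕ) : ℚ) = (n:ℚ) - 1 := by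
        push_cast [Nat.cast_sub (by omega : 1 ≤ n)]
        ring
      rw [this]; ring
    rw [hcast] at hEq
    have hkne : (k:ℚ) ≠ 0 := by exact_mod_cast (by omega : k ≠ 0)
    field_simp
    linear_combination hEq
  conv_rhs => rw [Finset.mul_sum]
  rw [Finset.sum_congr rfl hterm]
  have hsum : ∑ k ∈ Finset.Icc 1 n,
      (-1:ℚ)^k * PowerSeries.coeff (n-1) ((theta-1)^(k-1) * d⁄dX ℚ theta)
      = PowerSeries.coeff (n-1)
          ((∑ k ∈ Finset.Icc 1 n, (-1:ℚ⟦X⟧)^k * (theta-1)^(k-1)) * d⁄dX ℚ theta) := by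
    rw [Finset.sum_mul, map_sum]
    exact Finset.sum_congr rfl (fun k _ => by rw [mul_assoc, coeff_neg_one_pow_mul])
  rw [hsum]
  have hT : (∑ k ∈ Finset.Icc 1 n, (-1:ℚ⟦X⟧)^k * (theta-1)^(k-1))
      = - ∑ j ∈ range n, (-(theta-1))^j := by
    have h1 : (∑ k ∈ Finset.Icc 1 n, (-1:ℚ⟦X⟧)^k * (theta-1)^(k-1))
        = ∑ j ∈ range n, (-1:ℚ⟦X⟧)^(j+1) * (theta-1)^j := by
      apply Finset.sum_nbij' (i := fun k => k-1) (j := fun j => j+1)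
      · intro k hk
        simp only [Finset.mem_Icc] at hk
        simp only [Finset.mem_range]
        omega
      · intro j hj
        simp only [Finset.mem_range] at hj
        simp only [Finset.mem_Icc]
        omega
      · intro k hk
        simp only [Finset.mem_Icc] at hk
        omega
      · intro j _
        omega
      · intro k hk
        simp only [Finset.mem_Icc] at hk
        rw [show k-1+1 = k from by omega]
    rw [h1]
    calc ∑ j ∈ range n, (-1:ℚ⟦X⟧)^(j+1) * (theta-1)^j
        = ∑ j ∈ range n, -((-(theta-1))^j) :=
          Finset.sum_congr rfl (fun j _ => by
            rw [show -(theta - 1) = (-1 : ℚ⟦X⟧) * (theta - 1) from by ring, mul_pow]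
            ring)
      _ = - ∑ j ∈ range n, (-(theta-1))^j := by
          rw [← Finset.sum_neg_distrib]
  rw [hT, theta_deriv]
  have hgeo : theta * (∑ j ∈ range n, (-(theta-1))^j) = 1 - (-(theta-1))^n := by
    have h := geom_sum_mul (-(theta-1)) n
    linear_combination -h
  have hprod : (-∑ j ∈ range n, (-(theta-1))^j) * (theta * Fser)
      = -Fser + Fser * (-(theta-1))^n := by
    have he : (-∑ j ∈ range n, (-(theta-1))^j) * (theta * Fser)
        = -(Fser * (theta * ∑ j ∈ range n, (-(theta-1))^j)) := by ring
    rw [he, hgeo]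
    ring
  rw [hprod, map_add, map_neg]
  have hcF : PowerSeries.coeff (n-1) Fser
      = -2 * ∑ d ∈ n.divisors.filter (fun d => Odd d), (n:ℚ)/d := by
    unfold Fser
    rw [PowerSeries.coeff_mk, show n-1+1 = n from by omega]
  have hzero : PowerSeries.coeff (n-1) (Fser * (-(theta-1))^n) = 0 := by
    have hXg : (X:ℚ⟦X⟧) ∣ -(theta-1) := by
      apply dvd_neg.mpr
      rw [PowerSeries.X_dvd_iff, map_sub, map_one, theta_const, sub_self]
    have hXn : (X:ℚ⟦X⟧)^n ∣ Fser * (-(theta-1))^n :=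
      (pow_dvd_pow_of_dvd hXg n).mul_left _
    exact (PowerSeries.X_pow_dvd_iff.mp hXn) (n-1) (by omega)
  rw [hcF, hzero, add_zero]
  ring
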